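/- In the Temperley–Lieb algebra TL_4, let P_t = (A^{10} − A^{-2})e_1 + (A^{10} − A^2)e_2 + (A^{10} − A^6)e_3 + (A^8 − A^4)(e_2e_3 + e_3e_2) + (A^8 − 1)(e_2e_1 + e_1e_2 + e_1e_3) + (A^6 − A^2)(e_1e_2e_3 + e_1e_3e_2 + e_2e_3e_1 + e_3e_2e_1), let P̄_t be obtained from P_t by substituting A ↦ A^{-1} in every coefficient, and set r_t = (1 − A^{12})·1 − P_t and r̄_t = (1 − A^{-12})·1 − P̄_t. Further let d_1 = (A^8 − 1)e_1 − (A^2 − A^6)e_1e_3, d_2 = (A^8 − 1)e_3 − (A^2 − A^6)e_3e_1, d_3 = (A^8 − 1)e_1e_2 − (A^2 − A^6)e_3e_1e_2, d_4 = (A^8 − 1)e_2e_1 − (A^2 − A^6)e_2e_1e_3, d_5 = (A^8 − 1)e_1e_2e_3 − (A^2 − A^6)e_1e_3, and d_6 = (A^8 − 1)e_3e_2e_1 − (A^2 − A^6)e_3e_1. Then the element (A^4 − 1)^2(e_1 + e_3 − e_1e_2e_3 − e_3e_2e_1) lies in the R-submodule of TL_4 generated by r_t, r̄_t, d_1, d_2,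 d_3, d_4, d_5, d_6. -/

import Mathlib

/-!
Temperley–Lieb algebra `TL k` over the ring `R = ℤ[A, A⁻¹]` of Laurent polynomials,
with generators `e_1, …, e_{k-1}` and relations
`eᵢ² = δ eᵢ` (with `δ = -A² - A⁻²`), `eᵢ eᵢ₊₁ eᵢ = eᵢ`, `eᵢ₊₁ eᵢ eᵢ₊₁ = eᵢ₊₁`, and
`eᵢ eⱼ = eⱼ eᵢ` for `|i - j| ≥ 2`.
-/

noncomputable section

/-- The ring `R = ℤ[A, A⁻¹]` of Laurent polynomials over `ℤ`. -/
abbrev R : Type := LaurentPolynomial ℤ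

/-- `A n` denotes the `n`-th power `Aⁿ` of the distinguished invertible element `A`. -/
def A (n : ℤ) : R := LaurentPolynomial.T n

/-- `δ = -A² - A⁻²`. -/
def TLδ : R := -A 2 - A (-2)

/-- The Temperley–Lieb relations on the free `R`-algebra on `n` generators `ι 0, …, ι (n-1)`
(where `ι i` corresponds to `e_{i+1}`). -/
inductive TLRel (n : ℕ) : FreeAlgebra R (Fin n) → FreeAlgebra R (Fin n) → Prop
  | sq (i : Fin n) :
      TLRel n (FreeAlgebra.ι R i * FreeAlgebra.ι R i) (TLδ • FreeAlgebra.ι R i)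
  | braid_right (i j : Fin n) (h : (i : ℕ) + 1 = (j : ℕ)) :
      TLRel n (FreeAlgebra.ι R i * FreeAlgebra.ι R j * FreeAlgebra.ι R i) (FreeAlgebra.ι R i)
  | braid_left (i j : Fin n) (h : (i : ℕ) + 1 = (j : ℕ)) :
      TLRel n (FreeAlgebra.ι R j * FreeAlgebra.ι R i * FreeAlgebra.ι R j) (FreeAlgebra.ι R j)
  | comm (i j : Fin n) (h : (i : ℕ) + 2 ≤ (j : ℕ)) :
      TLRel n (FreeAlgebra.ι R i * FreeAlgebra.ι R j) (FreeAlgebra.ι R j * FreeAlgebra.ι R i)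

/-- The Temperley–Lieb algebra `TL_k` on `k` strands: the associative unital `R`-algebra
with generators `e_1, …, e_{k-1}` and the Temperley–Lieb relations. -/
def TL (k : ℕ) : Type := RingQuot (TLRel (k - 1))

instance (k : ℕ) : Ring (TL k) := inferInstanceAs (Ring (RingQuot _))
instance (k : ℕ) : Algebra R (TL k) := inferInstanceAs (Algebra R (RingQuot _))

/-- The generator `e_{i+1}` of `TL k`, for `i : Fin (k-1)`. -/
def e (k : ℕ) (i : Fin (k - 1)) : TL k :=
  RingQuot.mkAlgHom R (TLRel (k - 1)) (FreeAlgebra.ι R i)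

lemma e_sq (k : ℕ) (i : Fin (k - 1)) : e k i * e k i = TLδ • e k i := by
  have h := RingQuot.mkAlgHom_rel R (TLRel.sq (n := k - 1) i)
  simp only [e, map_mul, map_smul] at h ⊢
  exact h

lemma e_braid_right (k : ℕ) (i j : Fin (k - 1)) (h : (i : ℕ) + 1 = (j : ℕ)) :
    e k i * e k j * e k i = e k i := by
  have h' := RingQuot.mkAlgHom_rel R (TLRel.braid_right (n := k - 1) i j h)
  simp only [e, map_mul] at h' ⊢
  exact h'

lemma e_braid_left (k : ℕ) (i j : Fin (k - 1)) (h : (i : ℕ) + 1 = (j : ℕ)) :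
    e k j * e k i * e k j = e k j := by
  have h' := RingQuot.mkAlgHom_rel R (TLRel.braid_left (n := k - 1) i j h)
  simp only [e, map_mul] at h' ⊢
  exact h'

lemma e_comm (k : ℕ) (i j : Fin (k - 1)) (h : (i : ℕ) + 2 ≤ (j : ℕ)) :
    e k i * e k j = e k j * e k i := by
  have h' := RingQuot.mkAlgHom_rel R (TLRel.comm (n := k - 1) i j h)
  simp only [e, map_mul] at h' ⊢
  exact h'

/-- The canonical `R`-algebra homomorphism `TL k →ₐ[R] TL m` (for `k ≤ m`) sending each
generator `e_i` of `TL k` to the generator `e_i` of `TL m`. -/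
def TLincl {k m : ℕ} (h : k ≤ m) : TL k →ₐ[R] TL m :=
  RingQuot.liftAlgHom R
    ⟨FreeAlgebra.lift R (fun i => e m (Fin.castLE (Nat.sub_le_sub_right h 1) i)), by
      intro x y hxy
      induction hxy with
      | sq i => simp [map_mul, map_smul, FreeAlgebra.lift_ι_apply, e_sq]
      | braid_right i j hij =>
          simp only [map_mul, FreeAlgebra.lift_ι_apply]
          exact e_braid_right m _ _ (by simpa using hij)
      | braid_left i j hij =>
          simp only [map_mul, FreeAlgebra.lift_ι_apply]
          exact e_braid_left m _ _ (by simpa using hij)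
      | comm i j hij =>
          simp only [map_mul, FreeAlgebra.lift_ι_apply]
          exact e_comm m _ _ (by simpa using hij)⟩

@[simp] lemma TLincl_e {k m : ℕ} (h : k ≤ m) (i : Fin (k - 1)) :
    TLincl h (e k i) = e m (Fin.castLE (Nat.sub_le_sub_right h 1) i) := by
  rw [TLincl, e]
  erw [RingQuot.liftAlgHom_mkAlgHom_apply]
  rw [FreeAlgebra.lift_ι_apply]

/-! The element is an explicit `R`-linear combination,
`(A⁴ - 1)² (e₁ + e₃ - e₁e₂e₃ - e₃e₂e₁) = A² r_t + A¹⁴ r̄_t - A⁴(A⁴ - 1) d₁ + (A⁴ - 1) d₂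
  - A²(A⁴ - 1)(d₃ + d₄) - (A⁴ - 1)(d₅ + d₆)`,
and checking it only uses that `e₁` and `e₃` commute: once `e₃e₁` and `e₂e₃e₁` are rewritten as
`e₁e₃` and `e₂e₁e₃`, both sides are combinations of the same words in `e₁, e₂, e₃`, and the
coefficients agree as Laurent polynomials. -/

theorem A_mul_A (m n : ℤ) : A m * A n = A (m + n) := (LaurentPolynomial.T_add m n).symm

theorem A_pow (m : ℤ) (k : ℕ) : A m ^ k = A (k * m) := LaurentPolynomial.T_pow m k

theorem A_zero : A 0 = 1 := LaurentPolynomial.T_zero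

section SlidingRelations

variable {T : Type*} [Ring T] [Algebra R T]

/-- `q n` stands for `Aⁿ`: `upperSlidingPoly A` is `P_t` and `upperSlidingPoly (A ∘ Neg.neg)`,
i.e. `A ↦ A⁻¹` in the coefficients, is `P̄_t`. -/
def upperSlidingPoly (q : ℤ → R) (e₁ e₂ e₃ : T) : T :=
  (q 10 - q (-2)) • e₁ + (q 10 - q 2) • e₂ + (q 10 - q 6) • e₃
    + (q 8 - q 4) • (e₂ * e₃ + e₃ * e₂) + (q 8 - 1) • (e₂ * e₁ + e₁ * e₂ + e₁ * e₃)
    + (q 6 - q 2) • (e₁ * e₂ * e₃ + e₁ * e₃ * e₂ + e₂ * e₃ * e₁ + e₃ * e₂ * e₁)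

def upperSlidingRel (q : ℤ → R) (e₁ e₂ e₃ : T) : T :=
  (1 - q 12) • (1 : T) - upperSlidingPoly q e₁ e₂ e₃

/-- Each of `d₁, …, d₆` is `slideRel x y` for a pair of words `x, y`. -/
def slideRel (x y : T) : T := (A 8 - 1) • x - (A 2 - A 6) • y

theorem sq_smul_eq_sliding_combination (e₁ e₂ e₃ : T) (h13 : e₁ * e₃ = e₃ * e₁) :
    ((A 4 - 1) ^ 2) • (e₁ + e₃ - e₁ * e₂ * e₃ - e₃ * e₂ * e₁)
      = A 2 • upperSlidingRel A e₁ e₂ e₃ + A 14 • upperSlidingRel (A ∘ Neg.neg) e₁ e₂ e₃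
        - (A 4 * (A 4 - 1)) • slideRel e₁ (e₁ * e₃) + (A 4 - 1) • slideRel e₃ (e₃ * e₁)
        - (A 2 * (A 4 - 1)) • slideRel (e₁ * e₂) (e₃ * e₁ * e₂)
        - (A 2 * (A 4 - 1)) • slideRel (e₂ * e₁) (e₂ * e₁ * e₃)
        - (A 4 - 1) • slideRel (e₁ * e₂ * e₃) (e₁ * e₃)
        - (A 4 - 1) • slideRel (e₃ * e₂ * e₁) (e₃ * e₁) := by
  have h231 : e₂ * e₃ * e₁ = e₂ * e₁ * e₃ := by rw [mul_assoc, ← h13, mul_assoc]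
  simp only [upperSlidingRel, upperSlidingPoly, slideRel, Function.comp_apply, neg_neg]
  rw [← h13, h231]
  match_scalars <;> ring_nf <;> norm_num only [A_pow, A_mul_A, A_zero] <;> ring

theorem sq_smul_mem_span_slidingRels (e₁ e₂ e₃ : T) (h13 : e₁ * e₃ = e₃ * e₁) :
    ((A 4 - 1) ^ 2) • (e₁ + e₃ - e₁ * e₂ * e₃ - e₃ * e₂ * e₁)
      ∈ Submodule.span R {upperSlidingRel A e₁ e₂ e₃, upperSlidingRel (A ∘ Neg.neg) e₁ e₂ e₃,
        slideRel e₁ (e₁ * e₃), slideRel e₃ (e₃ * e₁), slideRel (e₁ * e₂) (e₃ * e₁ * e₂),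
        slideRel (e₂ * e₁) (e₂ * e₁ * e₃), slideRel (e₁ * e₂ * e₃) (e₁ * e₃),
        slideRel (e₃ * e₂ * e₁) (e₃ * e₁)} := by
  rw [sq_smul_eq_sliding_combination e₁ e₂ e₃ h13]
  refine sub_mem (sub_mem (sub_mem (sub_mem (add_mem (sub_mem (add_mem ?_ ?_) ?_) ?_) ?_) ?_) ?_) ?_ <;>
    exact Submodule.smul_mem _ _ (Submodule.subset_span (by simp))

end SlidingRelations

/-- the Remark of the paper: the element `(A⁴-1)²(e₁ + e₃ - e₁e₂e₃ - e₃e₂e₁)`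
lies in the `R`-submodule of `TL₄` generated by the sliding relation elements
`r_t`, `r̄_t`, `d₁, …, d₆`. -/
theorem remark_relation :
    let e₁ : TL 4 := e 4 ⟨0, by norm_num⟩
    let e₂ : TL 4 := e 4 ⟨1, by norm_num⟩
    let e₃ : TL 4 := e 4 ⟨2, by norm_num⟩
    let Pt : TL 4 := (A 10 - A (-2)) • e₁ + (A 10 - A 2) • e₂ + (A 10 - A 6) • e₃
        + (A 8 - A 4) • (e₂ * e₃ + e₃ * e₂) + (A 8 - 1) • (e₂ * e₁ + e₁ * e₂ + e₁ * e₃)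
        + (A 6 - A 2) • (e₁ * e₂ * e₃ + e₁ * e₃ * e₂ + e₂ * e₃ * e₁ + e₃ * e₂ * e₁)
    let Ptbar : TL 4 := (A (-10) - A 2) • e₁ + (A (-10) - A (-2)) • e₂ + (A (-10) - A (-6)) • e₃
        + (A (-8) - A (-4)) • (e₂ * e₃ + e₃ * e₂) + (A (-8) - 1) • (e₂ * e₁ + e₁ * e₂ + e₁ * e₃)
        + (A (-6) - A (-2)) • (e₁ * e₂ * e₃ + e₁ * e₃ * e₂ + e₂ * e₃ * e₁ + e₃ * e₂ * e₁)
    let rt : TL 4 := (1 - A 12) • (1 : TL 4) - Pt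
    let rtbar : TL 4 := (1 - A (-12)) • (1 : TL 4) - Ptbar
    let d₁ : TL 4 := (A 8 - 1) • e₁ - (A 2 - A 6) • (e₁ * e₃)
    let d₂ : TL 4 := (A 8 - 1) • e₃ - (A 2 - A 6) • (e₃ * e₁)
    let d₃ : TL 4 := (A 8 - 1) • (e₁ * e₂) - (A 2 - A 6) • (e₃ * e₁ * e₂)
    let d₄ : TL 4 := (A 8 - 1) • (e₂ * e₁) - (A 2 - A 6) • (e₂ * e₁ * e₃)
    let d₅ : TL 4 := (A 8 - 1) • (e₁ * e₂ * e₃) - (A 2 - A 6) • (e₁ * e₃)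
    let d₆ : TL 4 := (A 8 - 1) • (e₃ * e₂ * e₁) - (A 2 - A 6) • (e₃ * e₁)
    ((A 4 - 1) ^ 2) • (e₁ + e₃ - e₁ * e₂ * e₃ - e₃ * e₂ * e₁)
      ∈ Submodule.span R ({rt, rtbar, d₁, d₂, d₃, d₄, d₅, d₆} : Set (TL 4)) := by
  intro e₁ e₂ e₃ _ _ _ _ _ _ _ _ _ _
  exact sq_smul_mem_span_slidingRels e₁ e₂ e₃ (e_comm 4 ⟨0, by norm_num⟩ ⟨2, by norm_num⟩ le_rfl)

end
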